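/- Let p ≥ q ≥ 1 be integers, n = p+q, and R > 0. Let k₁, k₂, k₃ ∈ K = S(U(p)×U(q)) and t, l ∈ T_R. Then the matrix g = k₁ · exp(H_t) · k₂ · exp(H_l)⁻¹ · k₃ (matrix exponentials) satisfies ‖g‖² < n · cosh(4R), where ‖g‖ = (tr(g*g))^{1/2} is the Frobenius norm. -/

import Mathlib

open Matrix

/-- Membership in `K = S(U(p)×U(q))`: block-diagonal `diag(A,D)` with `A ∈ U(p)`, `D ∈ U(q)`
and `det A · det D = 1`. -/
def stmt3.inK (p q : ℕ) (k : Matrix (Fin p ⊕ Fin q) (Fin p ⊕ Fin q) ℂ) : Prop :=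
  ∃ A ∈ Matrix.unitaryGroup (Fin p) ℂ, ∃ D ∈ Matrix.unitaryGroup (Fin q) ℂ,
    A.det * D.det = 1 ∧ k = Matrix.fromBlocks A 0 0 D

/-- The matrix `H_t = [[0, t_{p×q}],[t_{q×p}, 0]]` for `t ∈ ℝ^q`. -/
noncomputable def stmt3.Ht (p q : ℕ) (t : Fin q → ℝ) :
    Matrix (Fin p ⊕ Fin q) (Fin p ⊕ Fin q) ℂ :=
  Matrix.fromBlocks 0
    (Matrix.of fun (i : Fin p) (j : Fin q) => if (i : ℕ) = (j : ℕ) then (t j : ℂ) else 0)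
    (Matrix.of fun (i : Fin q) (j : Fin p) => if (i : ℕ) = (j : ℕ) then (t i : ℂ) else 0) 0

/-- `t ∈ T_R`, i.e. `R > t₁ > t₂ > ⋯ > t_q > 0`. -/
def stmt3.inT (q : ℕ) (R : ℝ) (t : Fin q → ℝ) : Prop :=
  (∀ i j : Fin q, i < j → t j < t i) ∧ (∀ i, 0 < t i) ∧ (∀ i, t i < R)

namespace stmt3aux

noncomputable def c2 : ℝ := (Real.sqrt 2)⁻¹

lemma c2_sq_real : c2 * c2 = 2⁻¹ := by
  rw [c2, ← mul_inv, Real.mul_self_sqrt (by norm_num : (0:ℝ) ≤ 2)]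

lemma c2_sq : (c2 : ℂ) * (c2 : ℂ) = (2⁻¹ : ℂ) := by
  rw [← Complex.ofReal_mul, c2_sq_real]
  push_cast
  ring

variable (p q : ℕ)

/-- The `p × q` "embedding" matrix. -/
def Emat : Matrix (Fin p) (Fin q) ℂ := Matrix.of fun i j => if (i : ℕ) = (j : ℕ) then 1 else 0

noncomputable def wvec : Fin p → ℂ := fun i => if (i : ℕ) < q then (c2 : ℂ) else 1

noncomputable def Wm : Matrix (Fin p ⊕ Fin q) (Fin p ⊕ Fin q) ℂ :=
  Matrix.fromBlocks (diagonal (wvec p q)) ((c2 : ℂ) • Emat p q)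
    ((c2 : ℂ) • (Emat p q)ᵀ) ((-(c2 : ℂ)) • 1)

def dv (t : Fin q → ℝ) : Fin p ⊕ Fin q → ℝ :=
  Sum.elim (fun i => if h : (i : ℕ) < q then t ⟨i, h⟩ else 0) (fun i => -t i)

variable {p q}

lemma Emat_tr_mul (hpq : q ≤ p) : (Emat p q)ᵀ * Emat p q = 1 := by
  ext i j
  rw [Matrix.mul_apply, Matrix.one_apply]
  simp only [Emat, transpose_apply, Matrix.of_apply]
  rw [Finset.sum_eq_single (Fin.castLE hpq i)]
  · have h1 : ((Fin.castLE hpq i : Fin p) : ℕ) = (i : ℕ) := rfl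
    by_cases hij : i = j
    · subst hij; simp [h1]
    · have h2 : ¬((i : ℕ) = (j : ℕ)) := fun hv => hij (Fin.ext hv)
      simp [h1, h2, hij]
  · intro k _ hk
    have : ¬((k : ℕ) = (i : ℕ)) := fun hv => hk (Fin.ext hv)
    simp [this]
  · simp

lemma Emat_mul_tr : Emat p q * (Emat p q)ᵀ =
    diagonal (fun i : Fin p => if (i : ℕ) < q then 1 else 0) := by
  ext i j
  rw [Matrix.mul_apply]
  simp only [Emat, transpose_apply, Matrix.of_apply]
  by_cases h : (i : ℕ) < q
  · rw [Finset.sum_eq_single (⟨(i : ℕ), h⟩ : Fin q)]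
    · by_cases hij : i = j
      · subst hij; simp [diagonal, h]
      · have h2 : ¬((j : ℕ) = (i : ℕ)) := fun hv => hij (Fin.ext hv.symm)
        simp [diagonal, hij, h2]
    · intro k _ hk
      have : ¬((i : ℕ) = (k : ℕ)) := fun hv => hk (Fin.ext (by simpa using hv.symm))
      simp [this]
    · simp
  · rw [Finset.sum_eq_zero]
    · by_cases hij : i = j
      · subst hij; simp [diagonal, h]
      · simp [diagonal, hij]
    · intro k _
      have : ¬((i : ℕ) = (k : ℕ)) := fun hv => h (hv ▸ k.2)
      simp [this]

lemma diag_mul_Emat (hpq : q ≤ p) (u : Fin p → ℂ) :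
    diagonal u * Emat p q = Emat p q * diagonal (fun j => u (Fin.castLE hpq j)) := by
  ext i j
  rw [diagonal_mul, mul_diagonal]
  simp only [Emat, Matrix.of_apply]
  by_cases h : (i : ℕ) = (j : ℕ)
  · have : i = Fin.castLE hpq j := Fin.ext h
    rw [this]
    ring
  · rw [if_neg h, mul_zero, zero_mul]

lemma Emat_mul_diag_const (c : ℂ) :
    Emat p q * diagonal (fun _ : Fin q => c) = c • Emat p q := by
  ext i j
  rw [mul_diagonal]
  simp only [Matrix.smul_apply, smul_eq_mul]
  ring

lemma wvec_castLE (hpq : q ≤ p) (j : Fin q) : wvec p q (Fin.castLE hpq j) = (c2 : ℂ) := by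
  simp [wvec, lt_of_lt_of_le j.2 hpq]

lemma diag_wvec_mul_Emat (hpq : q ≤ p) :
    diagonal (wvec p q) * Emat p q = (c2 : ℂ) • Emat p q := by
  rw [diag_mul_Emat hpq]
  have : (fun j => wvec p q (Fin.castLE hpq j)) = fun _ => (c2 : ℂ) := by
    funext j; exact wvec_castLE hpq j
  rw [this, Emat_mul_diag_const]

lemma Emat_tr_mul_diag_wvec (hpq : q ≤ p) :
    (Emat p q)ᵀ * diagonal (wvec p q) = (c2 : ℂ) • (Emat p q)ᵀ := by
  have := congrArg Matrix.transpose (diag_wvec_mul_Emat hpq)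
  rw [transpose_mul, diagonal_transpose, transpose_smul] at this
  exact this

lemma Wm_herm : (Wm p q)ᴴ = Wm p q := by
  ext a b
  cases a <;> cases b <;>
    simp [Wm, Matrix.conjTranspose_apply, Matrix.fromBlocks, Emat, wvec,
      Matrix.diagonal_apply, Matrix.one_apply, eq_comm] <;>
    split_ifs <;>
    simp_all [Fin.ext_iff, Complex.ext_iff]

lemma Wm_def : Wm p q = Matrix.fromBlocks (diagonal (wvec p q)) ((c2 : ℂ) • Emat p q)
    ((c2 : ℂ) • (Emat p q)ᵀ) ((-(c2 : ℂ)) • 1) := rfl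

lemma Wm_mul_Wm (hpq : q ≤ p) : Wm p q * Wm p q = 1 := by
  have h11 : diagonal (wvec p q) * diagonal (wvec p q) +
      ((c2 : ℂ) • Emat p q) * ((c2 : ℂ) • (Emat p q)ᵀ) = 1 := by
    rw [Matrix.smul_mul, Matrix.mul_smul, smul_smul, Emat_mul_tr, diagonal_mul_diagonal]
    ext i j
    by_cases hij : i = j
    · subst hij
      simp only [Matrix.add_apply, diagonal_apply_eq, Matrix.smul_apply,
        Matrix.one_apply_eq, smul_eq_mul]
      by_cases h : (i : ℕ) < q
      · simp only [wvec, if_pos h]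
        rw [c2_sq]
        norm_num
      · simp [wvec, h]
    · simp [diagonal_apply_ne _ hij, Matrix.one_apply_ne hij]
  have h12 : diagonal (wvec p q) * ((c2 : ℂ) • Emat p q) +
      ((c2 : ℂ) • Emat p q) * ((-(c2 : ℂ)) • (1 : Matrix (Fin q) (Fin q) ℂ)) = 0 := by
    simp only [Matrix.mul_smul, Matrix.smul_mul, Matrix.mul_one, Matrix.one_mul,
      diag_wvec_mul_Emat hpq, smul_smul, ← add_smul]
    have : (c2 : ℂ) * c2 + -c2 * c2 = 0 := by ring
    rw [this, zero_smul]
  have h21 : ((c2 : ℂ) • (Emat p q)ᵀ) * diagonal (wvec p q) +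
      ((-(c2 : ℂ)) • (1 : Matrix (Fin q) (Fin q) ℂ)) * ((c2 : ℂ) • (Emat p q)ᵀ) = 0 := by
    simp only [Matrix.mul_smul, Matrix.smul_mul, Matrix.mul_one, Matrix.one_mul,
      Emat_tr_mul_diag_wvec hpq, smul_smul, ← add_smul]
    have : (c2 : ℂ) * c2 + c2 * -c2 = 0 := by ring
    rw [this, zero_smul]
  have h22 : ((c2 : ℂ) • (Emat p q)ᵀ) * ((c2 : ℂ) • Emat p q) +
      ((-(c2 : ℂ)) • (1 : Matrix (Fin q) (Fin q) ℂ)) * ((-(c2 : ℂ)) • (1 : Matrix (Fin q) (Fin q) ℂ)) = 1 := by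
    simp only [Matrix.mul_smul, Matrix.smul_mul, Matrix.mul_one, Matrix.one_mul,
      Emat_tr_mul hpq, smul_smul, ← add_smul]
    have : (c2 : ℂ) * c2 + -c2 * -c2 = 1 := by
      have h := c2_sq
      linear_combination 2 * h
    rw [this, one_smul]
  rw [Wm_def, fromBlocks_multiply, h11, h12, h21, h22, fromBlocks_one]


section part2

variable {p q : ℕ}

def tcv {q : ℕ} (t : Fin q → ℝ) : Fin q → ℂ := fun j => (t j : ℂ)

def d1v (p q : ℕ) (t : Fin q → ℝ) : Fin p → ℂ :=
  fun i => if h : (i : ℕ) < q then (t ⟨i, h⟩ : ℂ) else 0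

lemma d1v_castLE (hpq : q ≤ p) (t : Fin q → ℝ) :
    (fun j => d1v p q t (Fin.castLE hpq j)) = tcv t := by
  funext j
  simp only [d1v, tcv, Fin.coe_castLE]
  rw [dif_pos j.2]

lemma hTc (hpq : q ≤ p) (t : Fin q → ℝ) :
    diagonal (d1v p q t) * Emat p q = Emat p q * diagonal (tcv t) := by
  rw [diag_mul_Emat hpq, d1v_castLE hpq]

lemma Ht_blocks (t : Fin q → ℝ) :
    stmt3.Ht p q t =
      Matrix.fromBlocks 0 (Emat p q * diagonal (tcv t))
        ((Emat p q * diagonal (tcv t))ᵀ) 0 := by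
  ext a b
  cases a <;> cases b <;>
    simp [stmt3.Ht, Matrix.fromBlocks, Emat, tcv, mul_diagonal, diagonal_mul,
      transpose_apply, ite_mul, eq_comm]

lemma Ht_mul_Wm (hpq : q ≤ p) (t : Fin q → ℝ) :
    stmt3.Ht p q t * Wm p q = Wm p q * diagonal (fun a => (dv p q t a : ℂ)) := by
  have hd : (fun a => (dv p q t a : ℂ)) = Sum.elim (d1v p q t) (fun i => -(tcv t i)) := by
    funext a
    cases a with
    | inl i =>
      simp only [dv, Sum.elim_inl, d1v]
      split <;> simp
    | inr i => simp [dv, tcv]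
  have B11 : (Emat p q * diagonal (tcv t)) * ((c2 : ℂ) • (Emat p q)ᵀ) =
      diagonal (wvec p q) * diagonal (d1v p q t) := by
    rw [Matrix.mul_smul, ← hTc hpq, Matrix.mul_assoc, Emat_mul_tr, diagonal_mul_diagonal,
      diagonal_mul_diagonal, ← diagonal_smul]
    refine congrArg diagonal (funext fun i => ?_)
    simp only [Pi.smul_apply, Pi.mul_apply, smul_eq_mul, d1v, wvec]
    by_cases h : (i : ℕ) < q
    · rw [dif_pos h, if_pos h, if_pos h]; ring
    · rw [dif_neg h, if_neg h]; ring
  have B12 : (Emat p q * diagonal (tcv t)) * ((-(c2 : ℂ)) • (1 : Matrix (Fin q) (Fin q) ℂ)) =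
      ((c2 : ℂ) • Emat p q) * diagonal (fun i => -(tcv t i)) := by
    rw [Matrix.mul_smul, Matrix.mul_one, ← diagonal_neg, Matrix.mul_neg, Matrix.smul_mul,
      neg_smul]
  have B21 : (Emat p q * diagonal (tcv t))ᵀ * diagonal (wvec p q) =
      ((c2 : ℂ) • (Emat p q)ᵀ) * diagonal (d1v p q t) := by
    rw [← hTc hpq, transpose_mul, diagonal_transpose, Matrix.smul_mul, Matrix.mul_assoc,
      diagonal_mul_diagonal]
    have : (fun i => d1v p q t i * wvec p q i) = (c2 : ℂ) • d1v p q t := by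
      funext i
      simp only [Pi.smul_apply, smul_eq_mul, d1v, wvec]
      by_cases h : (i : ℕ) < q
      · rw [dif_pos h, if_pos h]; ring
      · rw [dif_neg h]; ring
    rw [this, diagonal_smul, Matrix.mul_smul]
  have B22 : (Emat p q * diagonal (tcv t))ᵀ * ((c2 : ℂ) • Emat p q) =
      ((-(c2 : ℂ)) • (1 : Matrix (Fin q) (Fin q) ℂ)) * diagonal (fun i => -(tcv t i)) := by
    rw [← hTc hpq, transpose_mul, diagonal_transpose, Matrix.mul_smul, Matrix.mul_assoc,
      hTc hpq, ← Matrix.mul_assoc, Emat_tr_mul hpq, Matrix.one_mul, Matrix.smul_mul,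
      Matrix.one_mul, ← diagonal_neg, smul_neg, neg_smul, neg_neg]
  rw [hd, ← fromBlocks_diagonal, Ht_blocks, Wm_def, fromBlocks_multiply, fromBlocks_multiply,
    B11, B12, B21, B22]
  simp only [Matrix.zero_mul, Matrix.mul_zero, add_zero, zero_add]

end part2


section part3

variable {p q : ℕ}

lemma Wm_inv (hpq : q ≤ p) : (Wm p q)⁻¹ = Wm p q :=
  Matrix.inv_eq_right_inv (Wm_mul_Wm hpq)

lemma Wm_unit (hpq : q ≤ p) : IsUnit (Wm p q) :=
  ⟨⟨Wm p q, Wm p q, Wm_mul_Wm hpq, Wm_mul_Wm hpq⟩, rfl⟩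

lemma exp_diag_real (f : (Fin p ⊕ Fin q) → ℝ) :
    NormedSpace.exp (diagonal (fun a => (f a : ℂ))) =
      diagonal (fun a => (Real.exp (f a) : ℂ)) := by
  rw [Matrix.exp_diagonal, Pi.exp_def]
  simp only [← Complex.exp_eq_exp_ℂ, ← Complex.ofReal_exp]

lemma exp_Ht (hpq : q ≤ p) (t : Fin q → ℝ) :
    NormedSpace.exp (stmt3.Ht p q t) =
      Wm p q * diagonal (fun a => (Real.exp (dv p q t a) : ℂ)) * Wm p q := by
  have h1 : stmt3.Ht p q t =
      Wm p q * diagonal (fun a => ((dv p q t a : ℝ) : ℂ)) * (Wm p q)⁻¹ := by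
    rw [Wm_inv hpq, ← Ht_mul_Wm hpq, Matrix.mul_assoc, Wm_mul_Wm hpq, Matrix.mul_one]
  have h2 : NormedSpace.exp
        (Wm p q * diagonal (fun a => ((dv p q t a : ℝ) : ℂ)) * (Wm p q)⁻¹) =
      Wm p q * NormedSpace.exp (diagonal (fun a => ((dv p q t a : ℝ) : ℂ))) * (Wm p q)⁻¹ :=
    Matrix.exp_conj _ _ (Wm_unit hpq)
  rw [h1, h2, Wm_inv hpq, exp_diag_real]

lemma exp_Ht_inv (hpq : q ≤ p) (t : Fin q → ℝ) :
    (NormedSpace.exp (stmt3.Ht p q t))⁻¹ =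
      Wm p q * diagonal (fun a => (Real.exp (-dv p q t a) : ℂ)) * Wm p q := by
  apply Matrix.inv_eq_right_inv
  rw [exp_Ht hpq t]
  have h2 : ∀ A B : Matrix (Fin p ⊕ Fin q) (Fin p ⊕ Fin q) ℂ,
      (Wm p q * A * Wm p q) * (Wm p q * B * Wm p q) =
        Wm p q * (A * ((Wm p q * Wm p q) * (B * Wm p q))) := by
    intro A B
    simp only [Matrix.mul_assoc]
  have h3 : (fun i => (Real.exp (dv p q t i) : ℂ) * (Real.exp (-dv p q t i) : ℂ)) =
      fun _ => (1 : ℂ) := by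
    funext i
    rw [← Complex.ofReal_mul, ← Real.exp_add]
    simp
  rw [h2, Wm_mul_Wm hpq, Matrix.one_mul, ← Matrix.mul_assoc (diagonal _) (diagonal _) (Wm p q),
    diagonal_mul_diagonal, h3, diagonal_one, Matrix.one_mul, Wm_mul_Wm hpq]

lemma inK_star_mul {k : Matrix (Fin p ⊕ Fin q) (Fin p ⊕ Fin q) ℂ} (hk : stmt3.inK p q k) :
    kᴴ * k = 1 := by
  obtain ⟨A, hA, D, hD, -, rfl⟩ := hk
  rw [fromBlocks_conjTranspose, fromBlocks_multiply]
  have hA' : Aᴴ * A = 1 := by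
    have := Matrix.mem_unitaryGroup_iff'.mp hA
    rwa [Matrix.star_eq_conjTranspose] at this
  have hD' : Dᴴ * D = 1 := by
    have := Matrix.mem_unitaryGroup_iff'.mp hD
    rwa [Matrix.star_eq_conjTranspose] at this
  simp [hA', hD', fromBlocks_one]

lemma inK_mul_star {k : Matrix (Fin p ⊕ Fin q) (Fin p ⊕ Fin q) ℂ} (hk : stmt3.inK p q k) :
    k * kᴴ = 1 :=
  mul_eq_one_comm.mp (inK_star_mul hk)

def eps : Fin p ⊕ Fin q → ℂ := Sum.elim (fun _ => 1) (fun _ => -1)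

lemma inK_eps {k : Matrix (Fin p ⊕ Fin q) (Fin p ⊕ Fin q) ℂ} (hk : stmt3.inK p q k)
    (a b : Fin p ⊕ Fin q) : eps a * k a b * eps b = k a b := by
  obtain ⟨A, hA, D, hD, -, rfl⟩ := hk
  cases a <;> cases b <;> simp [eps, Matrix.fromBlocks]

def flip (hpq : q ≤ p) : Fin p ⊕ Fin q → Fin p ⊕ Fin q
  | .inl i => if h : (i : ℕ) < q then .inr ⟨i, h⟩ else .inl i
  | .inr j => .inl (Fin.castLE hpq j)

lemma flip_invol (hpq : q ≤ p) : Function.Involutive (flip hpq) := by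
  intro a
  cases a with
  | inl i =>
    by_cases h : (i : ℕ) < q
    · simp [flip, h]
    · simp [flip, h]
  | inr j => simp [flip, j.2]

lemma dv_flip (hpq : q ≤ p) (t : Fin q → ℝ) (a : Fin p ⊕ Fin q) :
    dv p q t (flip hpq a) = - dv p q t a := by
  cases a with
  | inl i =>
    by_cases h : (i : ℕ) < q
    · simp [flip, h, dv]
    · simp [flip, h, dv]
  | inr j => simp [flip, dv, j.2]

lemma Wm_ll (i j : Fin p) :
    Wm p q (.inl i) (.inl j) = if i = j then (if (i : ℕ) < q then (c2 : ℂ) else 1) else 0 := by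
  simp [Wm_def, Matrix.diagonal_apply, wvec]

lemma Wm_lr (i : Fin p) (j : Fin q) :
    Wm p q (.inl i) (.inr j) = if (i : ℕ) = (j : ℕ) then (c2 : ℂ) else 0 := by
  simp only [Wm_def, fromBlocks_apply₁₂, Matrix.smul_apply, Emat, Matrix.of_apply,
    smul_eq_mul, mul_ite, mul_one, mul_zero]

lemma Wm_rl (i : Fin q) (j : Fin p) :
    Wm p q (.inr i) (.inl j) = if (i : ℕ) = (j : ℕ) then (c2 : ℂ) else 0 := by
  simp only [Wm_def, fromBlocks_apply₂₁, Matrix.smul_apply, Matrix.transpose_apply, Emat,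
    Matrix.of_apply, smul_eq_mul, mul_ite, mul_one, mul_zero, eq_comm]

lemma Wm_rr (i j : Fin q) :
    Wm p q (.inr i) (.inr j) = if i = j then -(c2 : ℂ) else 0 := by
  simp only [Wm_def, fromBlocks_apply₂₂, Matrix.smul_apply, Matrix.one_apply, smul_eq_mul,
    mul_ite, mul_one, mul_zero]

lemma Wm_entry_symm (a b : Fin p ⊕ Fin q) : Wm p q a b = Wm p q b a := by
  cases a with
  | inl i =>
    cases b with
    | inl j =>
      rw [Wm_ll, Wm_ll]
      by_cases hij : i = j
      · subst hij; rfl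
      · rw [if_neg hij, if_neg (Ne.symm hij)]
    | inr j =>
      rw [Wm_lr, Wm_rl]
      by_cases hij : (i : ℕ) = (j : ℕ)
      · rw [if_pos hij, if_pos hij.symm]
      · rw [if_neg hij, if_neg (fun hv => hij hv.symm)]
  | inr i =>
    cases b with
    | inl j =>
      rw [Wm_rl, Wm_lr]
      by_cases hij : (i : ℕ) = (j : ℕ)
      · rw [if_pos hij, if_pos hij.symm]
      · rw [if_neg hij, if_neg (fun hv => hij hv.symm)]
    | inr j =>
      rw [Wm_rr, Wm_rr]
      by_cases hij : i = j
      · subst hij; rfl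
      · rw [if_neg hij, if_neg (Ne.symm hij)]

lemma Wm_flip (hpq : q ≤ p) (a b : Fin p ⊕ Fin q) :
    Wm p q a (flip hpq b) = eps a * Wm p q a b := by
  cases b with
  | inl j =>
    by_cases h : (j : ℕ) < q
    · have hf : flip hpq (Sum.inl j) = Sum.inr ⟨(j : ℕ), h⟩ := by simp [flip, h]
      rw [hf]
      cases a with
      | inl i =>
        rw [Wm_lr, Wm_ll]
        by_cases hij : (i : ℕ) = (j : ℕ)
        · rw [if_pos hij, if_pos (Fin.ext hij), if_pos (by omega : (i : ℕ) < q)]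
          simp [eps]
        · rw [if_neg hij, if_neg (fun hv => hij (by rw [hv]))]
          simp [eps]
      | inr i =>
        rw [Wm_rr, Wm_rl]
        by_cases hij : (i : ℕ) = (j : ℕ)
        · rw [if_pos (Fin.ext (by simpa using hij)), if_pos hij]
          simp [eps]
        · rw [if_neg (fun hv => hij (by simpa using congrArg Fin.val hv)), if_neg hij]
          simp [eps]
    · have hf : flip hpq (Sum.inl j) = Sum.inl j := by simp [flip, h]
      rw [hf]
      cases a with
      | inl i => simp [eps]
      | inr i =>
        rw [Wm_rl]
        have hij : ¬((i : ℕ) = (j : ℕ)) := by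
          intro hv
          exact h (hv ▸ i.2)
        rw [if_neg hij]
        simp [eps]
  | inr j =>
    have hf : flip hpq (Sum.inr j) = Sum.inl (Fin.castLE hpq j) := by simp [flip]
    rw [hf]
    cases a with
    | inl i =>
      rw [Wm_ll, Wm_lr]
      by_cases hij : (i : ℕ) = (j : ℕ)
      · rw [if_pos (Fin.ext (by simpa using hij)), if_pos hij,
          if_pos (show (i : ℕ) < q by rw [hij]; exact j.2)]
        simp [eps]
      · rw [if_neg (fun hv => hij (by simpa using congrArg Fin.val hv)), if_neg hij]
        simp [eps]
    | inr i =>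
      rw [Wm_rl, Wm_rr]
      by_cases hij : (i : ℕ) = (j : ℕ)
      · rw [if_pos (by simpa using hij), if_pos (Fin.ext hij)]
        simp [eps]
      · rw [if_neg (by simpa using hij), if_neg (fun hv => hij (congrArg Fin.val hv))]
        simp [eps]

lemma u_flip (hpq : q ≤ p) {k : Matrix (Fin p ⊕ Fin q) (Fin p ⊕ Fin q) ℂ}
    (hk : stmt3.inK p q k) (a b : Fin p ⊕ Fin q) :
    (Wm p q * k * Wm p q) (flip hpq a) (flip hpq b) = (Wm p q * k * Wm p q) a b := by
  simp only [Matrix.mul_apply, Finset.sum_mul]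
  refine Finset.sum_congr rfl fun d _ => Finset.sum_congr rfl fun c _ => ?_
  have h1 : Wm p q (flip hpq a) c = eps c * Wm p q a c := by
    rw [Wm_entry_symm, Wm_flip hpq, Wm_entry_symm a c]
  have h2 : Wm p q d (flip hpq b) = eps d * Wm p q d b := by
    rw [Wm_flip hpq]
  rw [h1, h2]
  calc eps c * Wm p q a c * k c d * (eps d * Wm p q d b)
      = Wm p q a c * (eps c * k c d * eps d) * Wm p q d b := by ring
    _ = Wm p q a c * k c d * Wm p q d b := by rw [inK_eps hk]

end part3


section main

variable {p q : ℕ}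

lemma trace_conj (e f X : Matrix (Fin p ⊕ Fin q) (Fin p ⊕ Fin q) ℂ)
    (he : eᴴ * e = 1) (hf : f * fᴴ = 1) :
    ((e * X * f)ᴴ * (e * X * f)).trace = (Xᴴ * X).trace := by
  have h1 : (e * X * f)ᴴ * (e * X * f) = fᴴ * ((Xᴴ * X) * f) := by
    calc (e * X * f)ᴴ * (e * X * f) = fᴴ * (Xᴴ * ((eᴴ * e) * (X * f))) := by
          simp only [conjTranspose_mul, Matrix.mul_assoc]
      _ = fᴴ * ((Xᴴ * X) * f) := by
          rw [he, Matrix.one_mul]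
          simp only [Matrix.mul_assoc]
  rw [h1, Matrix.trace_mul_comm, Matrix.mul_assoc, hf, Matrix.mul_one]

lemma dv_abs_le {R : ℝ} (hq0 : 0 < q) (t : Fin q → ℝ) (ht : stmt3.inT q R t)
    (a : Fin p ⊕ Fin q) : |dv p q t a| ≤ t ⟨0, hq0⟩ := by
  have hmax : ∀ j : Fin q, t j ≤ t ⟨0, hq0⟩ := by
    intro j
    rcases eq_or_lt_of_le (show (⟨0, hq0⟩ : Fin q) ≤ j from Fin.mk_le_of_le_val (Nat.zero_le _)) with h | h
    · rw [← h]
    · exact (ht.1 _ _ h).le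
  have hpos : 0 < t ⟨0, hq0⟩ := ht.2.1 _
  cases a with
  | inl i =>
    simp only [dv, Sum.elim_inl]
    split
    · rw [abs_of_pos (ht.2.1 _)]
      exact hmax _
    · simpa using hpos.le
  | inr j =>
    simp only [dv, Sum.elim_inr, abs_neg]
    rw [abs_of_pos (ht.2.1 _)]
    exact hmax _

end main

end stmt3aux

open stmt3aux in
theorem stmt_3 (p q : ℕ) (hq : 1 ≤ q) (hpq : q ≤ p) (R : ℝ) (hR : 0 < R)
    (k₁ k₂ k₃ : Matrix (Fin p ⊕ Fin q) (Fin p ⊕ Fin q) ℂ)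
    (hk₁ : stmt3.inK p q k₁) (hk₂ : stmt3.inK p q k₂) (hk₃ : stmt3.inK p q k₃)
    (t l : Fin q → ℝ) (ht : stmt3.inT q R t) (hl : stmt3.inT q R l)
    (g : Matrix (Fin p ⊕ Fin q) (Fin p ⊕ Fin q) ℂ)
    (hg : g = k₁ * NormedSpace.exp (stmt3.Ht p q t) * k₂ *
      (NormedSpace.exp (stmt3.Ht p q l))⁻¹ * k₃) :
    ((gᴴ * g).trace).re < ((p + q : ℕ) : ℝ) * Real.cosh (4 * R) := by
  have hq0 : 0 < q := hq
  set W : Matrix (Fin p ⊕ Fin q) (Fin p ⊕ Fin q) ℂ := Wm p q with hW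
  set u : Matrix (Fin p ⊕ Fin q) (Fin p ⊕ Fin q) ℂ := W * k₂ * W with hu
  set Dt : Matrix (Fin p ⊕ Fin q) (Fin p ⊕ Fin q) ℂ :=
    diagonal (fun a => (Real.exp (dv p q t a) : ℂ)) with hDt
  set Dl : Matrix (Fin p ⊕ Fin q) (Fin p ⊕ Fin q) ℂ :=
    diagonal (fun a => (Real.exp (-dv p q l a) : ℂ)) with hDl
  set B : Matrix (Fin p ⊕ Fin q) (Fin p ⊕ Fin q) ℂ := Dt * u * Dl with hB
  -- step 1 : rewrite g
  have hg' : g = (k₁ * W) * B * (W * k₃) := by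
    rw [hg, exp_Ht hpq t, exp_Ht_inv hpq l, hB, hu]
    simp only [Matrix.mul_assoc]
    rfl
  -- step 2 : unitarity facts
  have he : (k₁ * W)ᴴ * (k₁ * W) = 1 := by
    rw [conjTranspose_mul, Wm_herm]
    calc W * k₁ᴴ * (k₁ * W) = W * ((k₁ᴴ * k₁) * W) := by simp only [Matrix.mul_assoc]
      _ = 1 := by rw [inK_star_mul hk₁, Matrix.one_mul, Wm_mul_Wm hpq]
  have hf : (W * k₃) * (W * k₃)ᴴ = 1 := by
    rw [conjTranspose_mul, Wm_herm]
    calc W * k₃ * (k₃ᴴ * W) = W * ((k₃ * k₃ᴴ) * W) := by simp only [Matrix.mul_assoc]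
      _ = 1 := by rw [inK_mul_star hk₃, Matrix.one_mul, Wm_mul_Wm hpq]
  have huu : uᴴ * u = 1 := by
    rw [hu, conjTranspose_mul, conjTranspose_mul, Wm_herm]
    calc W * (k₂ᴴ * W) * (W * k₂ * W)
        = W * (k₂ᴴ * ((W * W) * (k₂ * W))) := by simp only [Matrix.mul_assoc]
      _ = W * ((k₂ᴴ * k₂) * W) := by
          rw [Wm_mul_Wm hpq, Matrix.one_mul]
          simp only [Matrix.mul_assoc]
      _ = 1 := by rw [inK_star_mul hk₂, Matrix.one_mul, Wm_mul_Wm hpq]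
  -- step 3 : trace reduction
  have h3 : (gᴴ * g).trace = (Bᴴ * B).trace := by
    rw [hg']
    exact trace_conj _ _ _ he hf
  -- step 4 : trace as a real sum
  set N : (Fin p ⊕ Fin q) → (Fin p ⊕ Fin q) → ℝ := fun a b => Complex.normSq (u a b) with hN
  set c : (Fin p ⊕ Fin q) → (Fin p ⊕ Fin q) → ℝ :=
    fun a b => 2 * dv p q t a + 2 * (-dv p q l b) with hc
  have h4 : ((Bᴴ * B).trace).re = ∑ b, ∑ a, Real.exp (c a b) * N a b := by
    rw [Matrix.trace]
    rw [Complex.re_sum]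
    refine Finset.sum_congr rfl fun b _ => ?_
    rw [Matrix.diag_apply, Matrix.mul_apply, Complex.re_sum]
    refine Finset.sum_congr rfl fun a _ => ?_
    rw [conjTranspose_apply, Complex.star_def, ← Complex.normSq_eq_conj_mul_self,
      Complex.ofReal_re]
    have hBab : B a b = (Real.exp (dv p q t a) : ℂ) * u a b * (Real.exp (-dv p q l b) : ℂ) := by
      rw [hB, Matrix.mul_diagonal, diagonal_mul]
    rw [hBab]
    simp only [Complex.normSq_mul, Complex.normSq_ofReal]
    simp only [hc, hN]
    rw [show 2 * dv p q t a + 2 * (-dv p q l b) =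
      (dv p q t a + dv p q t a) + (-dv p q l b + -dv p q l b) by ring,
      Real.exp_add, Real.exp_add, Real.exp_add]
    ring
  -- step 5 : flip symmetry
  set σ : Equiv.Perm (Fin p ⊕ Fin q) := Function.Involutive.toPerm _ (flip_invol hpq) with hσ
  have hσ_apply : ∀ a, σ a = flip hpq a := fun a => rfl
  have hNsym : ∀ a b, N (flip hpq a) (flip hpq b) = N a b := by
    intro a b
    rw [hN]
    exact congrArg Complex.normSq (u_flip hpq hk₂ a b)
  have h5 : (∑ b, ∑ a, Real.exp (c a b) * N a b)
      = ∑ b, ∑ a, Real.exp (-(c a b)) * N a b := by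
    have key : ∀ F : (Fin p ⊕ Fin q) → (Fin p ⊕ Fin q) → ℝ,
        (∑ b, ∑ a, F (σ a) (σ b)) = ∑ b, ∑ a, F a b := by
      intro F
      calc (∑ b, ∑ a, F (σ a) (σ b)) = ∑ b, ∑ a, F a (σ b) := by
            refine Finset.sum_congr rfl fun b _ => ?_
            exact Equiv.sum_comp σ (fun a => F a (σ b))
        _ = ∑ b, ∑ a, F a b := Equiv.sum_comp σ (fun b => ∑ a, F a b)
    have := key (fun a b => Real.exp (c a b) * N a b)
    rw [← this]
    refine Finset.sum_congr rfl fun b _ => Finset.sum_congr rfl fun a _ => ?_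
    rw [hσ_apply, hσ_apply, hNsym]
    congr 2
    rw [hc]
    simp only [dv_flip hpq]
    ring
  -- step 6 : column sums of N
  have h6 : ∀ b, ∑ a, N a b = 1 := by
    intro b
    have h1 : (uᴴ * u) b b = 1 := by rw [huu, Matrix.one_apply_eq]
    rw [Matrix.mul_apply] at h1
    have h2 : ∀ a, (uᴴ) b a * u a b = ((N a b : ℝ) : ℂ) := by
      intro a
      rw [conjTranspose_apply, Complex.star_def, ← Complex.normSq_eq_conj_mul_self, hN]
    rw [Finset.sum_congr rfl (fun a _ => h2 a), ← Complex.ofReal_sum] at h1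
    exact_mod_cast h1
  have h7 : (∑ b : Fin p ⊕ Fin q, ∑ a, N a b) = ((p + q : ℕ) : ℝ) := by
    rw [Finset.sum_congr rfl (fun b _ => h6 b), Finset.sum_const, Finset.card_univ]
    simp [Fintype.card_sum]
  -- step 7 : the bound
  set T0 : ℝ := t ⟨0, hq0⟩ with hT0
  set L0 : ℝ := l ⟨0, hq0⟩ with hL0
  set C : ℝ := Real.cosh (2 * T0 + 2 * L0) with hC
  have hT0R : T0 < R := ht.2.2 _
  have hL0R : L0 < R := hl.2.2 _
  have hT0pos : 0 < T0 := ht.2.1 _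
  have hL0pos : 0 < L0 := hl.2.1 _
  have hcosh : ∀ a b, Real.exp (c a b) + Real.exp (-(c a b)) ≤ 2 * C := by
    intro a b
    have habs : |c a b| ≤ |2 * T0 + 2 * L0| := by
      rw [abs_of_pos (by linarith : (0:ℝ) < 2 * T0 + 2 * L0)]
      have h1 := dv_abs_le hq0 t ht a
      have h2 := dv_abs_le hq0 l hl b
      rw [hc]
      have := abs_add_le (2 * dv p q t a) (2 * (-dv p q l b))
      rw [abs_mul, abs_mul, abs_neg] at this
      simp only [abs_two] at this
      calc |2 * dv p q t a + 2 * (-dv p q l b)| ≤ 2 * |dv p q t a| + 2 * |dv p q l b| := this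
        _ ≤ 2 * T0 + 2 * L0 := by rw [hT0, hL0]; linarith
    have := Real.cosh_le_cosh.mpr habs
    rw [Real.cosh_eq] at this
    rw [hC]
    linarith
  have hS : (∑ b, ∑ a, Real.exp (c a b) * N a b) ≤ C * ((p + q : ℕ) : ℝ) := by
    have hdouble : 2 * (∑ b, ∑ a, Real.exp (c a b) * N a b)
        = ∑ b, ∑ a, (Real.exp (c a b) + Real.exp (-(c a b))) * N a b := by
      rw [two_mul]
      nth_rewrite 2 [h5]
      rw [← Finset.sum_add_distrib]
      refine Finset.sum_congr rfl fun b _ => ?_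
      rw [← Finset.sum_add_distrib]
      refine Finset.sum_congr rfl fun a _ => ?_
      ring
    have hbound : (∑ b, ∑ a, (Real.exp (c a b) + Real.exp (-(c a b))) * N a b)
        ≤ ∑ b : Fin p ⊕ Fin q, ∑ a, (2 * C) * N a b := by
      refine Finset.sum_le_sum fun b _ => Finset.sum_le_sum fun a _ => ?_
      exact mul_le_mul_of_nonneg_right (hcosh a b) (Complex.normSq_nonneg _)
    have hval : (∑ b : Fin p ⊕ Fin q, ∑ a, (2 * C) * N a b) = 2 * C * ((p + q : ℕ) : ℝ) := by
      simp only [← Finset.mul_sum]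
      rw [h7]
    nlinarith [hdouble, hbound, hval]
  have hCR : C < Real.cosh (4 * R) := by
    rw [hC]
    apply Real.cosh_lt_cosh.mpr
    rw [abs_of_pos (by linarith : (0:ℝ) < 2 * T0 + 2 * L0),
      abs_of_pos (by linarith : (0:ℝ) < 4 * R)]
    linarith
  have hn : (0:ℝ) < ((p + q : ℕ) : ℝ) := by
    have : 0 < p + q := by omega
    exact_mod_cast this
  calc ((gᴴ * g).trace).re = ∑ b, ∑ a, Real.exp (c a b) * N a b := by rw [h3, h4]
    _ ≤ C * ((p + q : ℕ) : ℝ) := hS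
    _ < Real.cosh (4 * R) * ((p + q : ℕ) : ℝ) := by
        exact mul_lt_mul_of_pos_right hCR hn
    _ = ((p + q : ℕ) : ℝ) * Real.cosh (4 * R) := by ring
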